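/- arXiv:1705.01743 — 3 statements merged into one kernel-verified Lean document; each statement's English description precedes it below -/
import Mathlib

section
/- Let n ≥ 1 and let U be a nonempty connected open subset of ℂⁿ. Let T : ℂⁿ → ℝ be twice continuously differentiable on U and pluriharmonic on U, i.e. for every z ∈ U and every v ∈ ℂⁿ one has D²T(z)(v,v) + D²T(z)(i·v, i·v) = 0, where D²T(z) denotes the second (real) Fréchet derivative of T at z. If T attains its minimum over U at some point x₀ ∈ U (that is, T(x₀) ≤ T(x) for all x ∈ U), then T is constant on U. -/
/-!
Restricted to a complex line, a pluriharmonic function is harmonic, and on a disc a harmonic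
function is the real part of a holomorphic `F`. A minimum of `Re F` at the centre is a maximum of
`‖exp (-F)‖`, so by the maximum modulus principle `Re F` is constant on the disc. Joining the centre
of a ball to its other points by complex lines, the set where `T` attains its minimum is open; it is
also relatively closed, hence all of `U` by connectedness.
-/

open Complex Metric Set Topology InnerProductSpace

theorem IsPreconnected.eqOn_const_of_isOpen_setOf_eq {X Y : Type*} [TopologicalSpace X]
    [TopologicalSpace Y] [T1Space Y] {f : X → Y} {U : Set X} (hU : IsPreconnected U)
    (hUo : IsOpen U) (hf : ContinuousOn f U) {x₀ : X} (hx₀ : x₀ ∈ U)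
    (hopen : IsOpen {x ∈ U | f x = f x₀}) : EqOn f (Function.const X (f x₀)) U := by
  intro x hx
  have hcover : U ⊆ {x ∈ U | f x = f x₀} ∪ (U ∩ f ⁻¹' {f x₀}ᶜ) := fun y hy =>
    (em (f y = f x₀)).imp (⟨hy, ·⟩) (⟨hy, ·⟩)
  exact (hU.subset_left_of_subset_union hopen
    (hf.isOpen_inter_preimage hUo isOpen_compl_singleton)
    (disjoint_left.2 fun _ h h' => h'.2 h.2) hcover ⟨x₀, hx₀, hx₀, rfl⟩ hx).2

theorem fderiv_fderiv_comp_affine {𝕜 E F G : Type*} [NontriviallyNormedField 𝕜]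
    [NormedAddCommGroup E] [NormedSpace 𝕜 E] [NormedAddCommGroup F] [NormedSpace 𝕜 F]
    [NormedAddCommGroup G] [NormedSpace 𝕜 G] {f : E → G} (x : E) (A : F →L[𝕜] E) {w : F}
    (hf : ContDiffAt 𝕜 2 f (x + A w)) (a b : F) :
    fderiv 𝕜 (fderiv 𝕜 fun w => f (x + A w)) w a b
      = fderiv 𝕜 (fderiv 𝕜 f) (x + A w) (A a) (A b) := by
  have hA : ∀ w, HasFDerivAt (fun w => x + A w) A w := fun w => A.hasFDerivAt.const_add x
  have hf₁ : ∀ᶠ w' in 𝓝 w, DifferentiableAt 𝕜 f (x + A w') :=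
    (hA w).continuousAt.eventually ((hf.eventually (by simp)).mono
      fun y hy => hy.differentiableAt (by norm_num))
  have hf₂ : DifferentiableAt 𝕜 (fderiv 𝕜 f) (x + A w) :=
    (hf.fderiv_right (m := 1) le_rfl).differentiableAt one_ne_zero
  have hfirst : fderiv 𝕜 (fun w => f (x + A w)) =ᶠ[𝓝 w]
      fun w' => (ContinuousLinearMap.compL 𝕜 F E G).flip A (fderiv 𝕜 f (x + A w')) := by
    filter_upwards [hf₁] with w' hw'
    exact (hw'.hasFDerivAt.comp w' (hA w')).fderiv
  have hsecond : HasFDerivAt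
      (fun w' => (ContinuousLinearMap.compL 𝕜 F E G).flip A (fderiv 𝕜 f (x + A w')))
      (((ContinuousLinearMap.compL 𝕜 F E G).flip A).comp
        ((fderiv 𝕜 (fderiv 𝕜 f) (x + A w)).comp A)) w :=
    ((ContinuousLinearMap.compL 𝕜 F E G).flip A).hasFDerivAt.comp w
      (hf₂.hasFDerivAt.comp w (hA w))
  rw [hfirst.fderiv_eq, hsecond.fderiv]
  rfl

theorem harmonicOnNhd_of_fderiv_fderiv {F : Type*} [NormedAddCommGroup F] [NormedSpace ℝ F]
    {f : ℂ → F} {s : Set ℂ} (hs : IsOpen s) (hf : ContDiffOn ℝ 2 f s)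
    (hΔ : ∀ z ∈ s, fderiv ℝ (fderiv ℝ f) z 1 1 + fderiv ℝ (fderiv ℝ f) z I I = 0) :
    HarmonicOnNhd f s := by
  intro z hz
  refine ⟨hf.contDiffAt (hs.mem_nhds hz), ?_⟩
  filter_upwards [hs.mem_nhds hz] with y hy
  simpa [laplacian_eq_iteratedFDeriv_complexPlane, iteratedFDeriv_two_apply] using hΔ y hy

theorem InnerProductSpace.HarmonicOnNhd.eqOn_ball_of_isMinOn {f : ℂ → ℝ} {c : ℂ} {r : ℝ}
    (hf : HarmonicOnNhd f (ball c r)) (hmin : IsMinOn f (ball c r) c) :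
    EqOn f (Function.const ℂ (f c)) (ball c r) := by
  intro z hz
  obtain ⟨F, hFan, hFre⟩ := hf.exists_analyticOnNhd_ball_re_eq
  have hc : c ∈ ball c r := mem_ball_self (pos_of_mem_ball hz)
  have hnorm : ∀ w ∈ ball c r, ‖exp (-F w)‖ = Real.exp (-f w) := fun w hw => by
    rw [norm_exp, neg_re, ← show (F w).re = f w from hFre hw]
  have hmax : IsMaxOn (norm ∘ fun w => exp (-F w)) (ball c r) c := isMaxOn_iff.2 fun w hw => by
    simp only [Function.comp_apply, hnorm w hw, hnorm c hc]
    exact Real.exp_le_exp.2 (neg_le_neg (hmin hw))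
  have := norm_eqOn_of_isPreconnected_of_isMaxOn (convex_ball c r).isPreconnected isOpen_ball
    hFan.differentiableOn.neg.cexp hc hmax hz
  simpa [hnorm z hz, hnorm c hc] using this

section Pluriharmonic

variable {E : Type*} [NormedAddCommGroup E] [NormedSpace ℂ E]

def IsPluriharmonicOn (T : E → ℝ) (U : Set E) : Prop :=
  ContDiffOn ℝ 2 T U ∧
    ∀ z ∈ U, ∀ v : E, fderiv ℝ (fderiv ℝ T) z v v + fderiv ℝ (fderiv ℝ T) z (I • v) (I • v) = 0

theorem IsPluriharmonicOn.mono {T : E → ℝ} {U V : Set E} (hT : IsPluriharmonicOn T U)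
    (hVU : V ⊆ U) : IsPluriharmonicOn T V :=
  ⟨hT.1.mono hVU, fun z hz => hT.2 z (hVU hz)⟩

theorem IsPluriharmonicOn.harmonicOnNhd_comp_line {T : E → ℝ} {U : Set E}
    (hT : IsPluriharmonicOn T U) (hU : IsOpen U) (x v : E) {s : Set ℂ} (hs : IsOpen s)
    (hsU : MapsTo (fun w : ℂ => x + w • v) s U) :
    HarmonicOnNhd (fun w : ℂ => T (x + w • v)) s := by
  set A : ℂ →L[ℝ] E := (ContinuousLinearMap.id ℝ ℂ).smulRight v
  have hline : ContDiff ℝ 2 fun w : ℂ => x + A w := contDiff_const.add A.contDiff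
  refine harmonicOnNhd_of_fderiv_fderiv hs (hT.1.comp hline.contDiffOn hsU) fun w hw => ?_
  have hTw : ContDiffAt ℝ 2 T (x + A w) := hT.1.contDiffAt (hU.mem_nhds (hsU hw))
  change fderiv ℝ (fderiv ℝ fun w => T (x + A w)) w 1 1
    + fderiv ℝ (fderiv ℝ fun w => T (x + A w)) w I I = 0
  rw [fderiv_fderiv_comp_affine x A hTw, fderiv_fderiv_comp_affine x A hTw]
  simpa [A] using hT.2 _ (hsU hw) v

theorem IsPluriharmonicOn.eqOn_ball_of_isMinOn {T : E → ℝ} {x : E} {r : ℝ}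
    (hT : IsPluriharmonicOn T (ball x r)) (hmin : IsMinOn T (ball x r) x) :
    EqOn T (Function.const E (T x)) (ball x r) := by
  intro y hy
  obtain rfl | hyx := eq_or_ne y x
  · rfl
  have hv : 0 < ‖y - x‖ := norm_pos_iff.2 (sub_ne_zero.2 hyx)
  have hline : MapsTo (fun w : ℂ => x + w • (y - x)) (ball 0 (r / ‖y - x‖)) (ball x r) := by
    intro w hw
    rw [mem_ball_zero_iff, lt_div_iff₀ hv] at hw
    rwa [mem_ball, dist_eq_norm, add_sub_cancel_left, norm_smul]
  have h1 : (1 : ℂ) ∈ ball 0 (r / ‖y - x‖) := by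
    rwa [mem_ball_zero_iff, norm_one, one_lt_div hv, ← dist_eq_norm]
  have hharm := hT.harmonicOnNhd_comp_line isOpen_ball x (y - x) isOpen_ball hline
  simpa using hharm.eqOn_ball_of_isMinOn
    (isMinOn_iff.2 fun w hw => by simpa using hmin (hline hw)) h1

end Pluriharmonic

theorem pluriharmonic_min_const_general
    (n : ℕ)
    (U : Set (EuclideanSpace ℂ (Fin n)))
    (hUopen : IsOpen U) (hUconn : IsConnected U)
    (T : EuclideanSpace ℂ (Fin n) → ℝ)
    (hT : ContDiffOn ℝ 2 T U)
    (hpluri : ∀ z ∈ U, ∀ v : EuclideanSpace ℂ (Fin n),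
      fderiv ℝ (fderiv ℝ T) z v v
        + fderiv ℝ (fderiv ℝ T) z (Complex.I • v) (Complex.I • v) = 0)
    (x₀ : EuclideanSpace ℂ (Fin n)) (hx₀ : x₀ ∈ U)
    (hmin : ∀ x ∈ U, T x₀ ≤ T x) :
    ∀ x ∈ U, T x = T x₀ := by
  have hTU : IsPluriharmonicOn T U := ⟨hT, hpluri⟩
  refine hUconn.isPreconnected.eqOn_const_of_isOpen_setOf_eq hUopen hT.continuousOn hx₀ ?_
  rw [Metric.isOpen_iff]
  rintro x ⟨hxU, hxT⟩
  obtain ⟨r, hr, hball⟩ := Metric.isOpen_iff.mp hUopen x hxU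
  have hxmin : IsMinOn T (ball x r) x := isMinOn_iff.2 fun y hy => hxT ▸ hmin y (hball hy)
  exact ⟨r, hr, fun y hy => ⟨hball hy, hxT ▸ (hTU.mono hball).eqOn_ball_of_isMinOn hxmin hy⟩⟩

/-- A C² pluriharmonic function on a nonempty connected open subset of ℂⁿ that
attains its minimum there is constant. -/
theorem pluriharmonic_min_const
    (n : ℕ) (hn : 1 ≤ n)
    (U : Set (EuclideanSpace ℂ (Fin n)))
    (hUopen : IsOpen U) (hUconn : IsConnected U)
    (T : EuclideanSpace ℂ (Fin n) → ℝ)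
    (hT : ContDiffOn ℝ 2 T U)
    (hpluri : ∀ z ∈ U, ∀ v : EuclideanSpace ℂ (Fin n),
      fderiv ℝ (fderiv ℝ T) z v v
        + fderiv ℝ (fderiv ℝ T) z (Complex.I • v) (Complex.I • v) = 0)
    (x₀ : EuclideanSpace ℂ (Fin n)) (hx₀ : x₀ ∈ U)
    (hmin : ∀ x ∈ U, T x₀ ≤ T x) :
    ∀ x ∈ U, T x = T x₀ :=
  pluriharmonic_min_const_general n U hUopen hUconn T hT hpluri x₀ hx₀ hmin
end

section
/- Let U be a subset of ℂ, let s₀ ∈ U, and let C > 0 and L > 0. Let η : ℂ → ℝ be a function such that for every s ∈ U: η(s) > 0, η is (real) differentiable at s, and |Dη(s)(1)| ≤ C·η(s) and |Dη(s)(i)| ≤ C·η(s). Assume that every point s ∈ U can be joined to s₀ by a C¹ path of length at most L in U, i.e. there exists a continuously differentiable map γ : [0,1] → ℂ with γ(0) = s₀, γ(1) = s, γ(t) ∈ U for all t ∈ [0,1], and ∫₀¹ ‖γ'(t)‖ dt ≤ L. Then η(s) ≤ η(s₀)·exp(2·C·L) for every s ∈ U; in particular η is uniformly bounded on U. -/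
/-!
Along a path `γ` from `s₀` to `s`, the derivative of `t ↦ log η(γ t)` is
`Dη(γ t)(γ' t) / η(γ t)`. Splitting `γ' t` into real and imaginary parts, the bounds on the
partial derivatives give `‖Dη(γ t)‖ ≤ 2C·η(γ t)`, so this derivative is at most `2C‖γ' t‖`.
Integrating, `log η(s) - log η(s₀) ≤ 2C·length(γ) ≤ 2CL`.
-/

open Set

namespace ContinuousLinearMap

theorem opNorm_le_two_mul_of_norm_apply_one_le_of_norm_apply_I_le {E : Type*}
    [NormedAddCommGroup E] [NormedSpace ℝ E] (f : ℂ →L[ℝ] E) {M : ℝ}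
    (h₁ : ‖f 1‖ ≤ M) (hI : ‖f Complex.I‖ ≤ M) : ‖f‖ ≤ 2 * M := by
  have hM : 0 ≤ M := (norm_nonneg _).trans h₁
  refine f.opNorm_le_bound (by positivity) fun v ↦ ?_
  have hv : f v = v.re • f 1 + v.im • f Complex.I := by
    conv_lhs => rw [← Complex.re_add_im v]
    simp [Complex.real_smul, ← map_smul, mul_comm]
  calc ‖f v‖ ≤ |v.re| * ‖f 1‖ + |v.im| * ‖f Complex.I‖ := by
        rw [hv]; exact (norm_add_le _ _).trans (by simp [norm_smul])
    _ ≤ ‖v‖ * M + ‖v‖ * M := by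
        gcongr
        · exact Complex.abs_re_le_norm v
        · exact Complex.abs_im_le_norm v
    _ = 2 * M * ‖v‖ := by ring

end ContinuousLinearMap
theorem log_comp_sub_log_comp_le_mul_integral_norm_derivWithin {E : Type*}
    [NormedAddCommGroup E] [NormedSpace ℝ E] {η : E → ℝ} {γ : ℝ → E} {a b K : ℝ}
    (hab : a < b) (hγ : ContDiffOn ℝ 1 γ (Icc a b))
    (hpos : ∀ t ∈ Icc a b, 0 < η (γ t))
    (hdiff : ∀ t ∈ Icc a b, DifferentiableAt ℝ η (γ t))
    (hbound : ∀ t ∈ Icc a b, ‖fderiv ℝ η (γ t)‖ ≤ K * η (γ t)) :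
    Real.log (η (γ b)) - Real.log (η (γ a)) ≤
      K * ∫ t in a..b, ‖derivWithin γ (Icc a b) t‖ := by
  set γ' := derivWithin γ (Icc a b)
  have hγ'_cont : ContinuousOn (‖γ' ·‖) (Icc a b) :=
    (hγ.continuousOn_derivWithin (uniqueDiffOn_Icc hab) le_rfl).norm
  have hlog_cont : ContinuousOn (fun t ↦ Real.log (η (γ t))) (Icc a b) := fun t ht ↦
    ((hdiff t ht).continuousAt.comp_continuousWithinAt (hγ.continuousOn t ht)).log
      (hpos t ht).ne'
  have hlog_deriv : ∀ t ∈ Ioo a b, HasDerivAt (fun t ↦ Real.log (η (γ t)))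
      ((η (γ t))⁻¹ * fderiv ℝ η (γ t) (γ' t)) t := fun t ht ↦ by
    have hγ_deriv : HasDerivAt γ (γ' t) t :=
      ((hγ.differentiableOn one_ne_zero t (Ioo_subset_Icc_self ht)).hasDerivWithinAt).hasDerivAt
        (Icc_mem_nhds ht.1 ht.2)
    have := ((hdiff t (Ioo_subset_Icc_self ht)).hasFDerivAt.comp_hasDerivAt t hγ_deriv).log
      (hpos t (Ioo_subset_Icc_self ht)).ne'
    simpa [div_eq_inv_mul] using this
  have hlog_deriv_le : ∀ t ∈ Ioo a b,
      (η (γ t))⁻¹ * fderiv ℝ η (γ t) (γ' t) ≤ K * ‖γ' t‖ := fun t ht ↦ by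
    have ht' := Ioo_subset_Icc_self ht
    rw [inv_mul_le_iff₀ (hpos t ht')]
    calc fderiv ℝ η (γ t) (γ' t) ≤ ‖fderiv ℝ η (γ t)‖ * ‖γ' t‖ :=
          (le_abs_self _).trans ((fderiv ℝ η (γ t)).le_opNorm (γ' t))
      _ ≤ K * η (γ t) * ‖γ' t‖ := by gcongr; exact hbound t ht'
      _ = η (γ t) * (K * ‖γ' t‖) := by ring
  rw [← intervalIntegral.integral_const_mul]
  exact intervalIntegral.sub_le_integral_of_hasDeriv_right_of_le hab.le hlog_cont
    (fun t ht ↦ (hlog_deriv t ht).hasDerivWithinAt) (hγ'_cont.const_smul K).integrableOn_Icc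
    hlog_deriv_le

theorem bounded_on_path_connected_of_partial_derivative_bound_general
    (U : Set ℂ) (s₀ : ℂ)
    (C L : ℝ) (hC : 0 < C)
    (η : ℂ → ℝ)
    (hpos : ∀ s ∈ U, 0 < η s)
    (hdiff : ∀ s ∈ U, DifferentiableAt ℝ η s)
    (hx : ∀ s ∈ U, |fderiv ℝ η s 1| ≤ C * η s)
    (hy : ∀ s ∈ U, |fderiv ℝ η s Complex.I| ≤ C * η s)
    (hpath : ∀ s ∈ U, ∃ γ : ℝ → ℂ,
      ContDiffOn ℝ 1 γ (Set.Icc 0 1) ∧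
      γ 0 = s₀ ∧ γ 1 = s ∧
      (∀ t ∈ Set.Icc (0:ℝ) 1, γ t ∈ U) ∧
      (∫ t in (0:ℝ)..1, ‖derivWithin γ (Set.Icc 0 1) t‖) ≤ L) :
    ∀ s ∈ U, η s ≤ η s₀ * Real.exp (2 * C * L) := by
  intro s hs
  obtain ⟨γ, hγ, rfl, rfl, hγU, hlen⟩ := hpath s hs
  have hbound : ∀ t ∈ Icc (0:ℝ) 1, ‖fderiv ℝ η (γ t)‖ ≤ 2 * C * η (γ t) := fun t ht ↦ by
    simpa only [mul_assoc] using
      (fderiv ℝ η (γ t)).opNorm_le_two_mul_of_norm_apply_one_le_of_norm_apply_I_le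
        (hx _ (hγU t ht)) (hy _ (hγU t ht))
  have hlog := log_comp_sub_log_comp_le_mul_integral_norm_derivWithin one_pos hγ
    (fun t ht ↦ hpos _ (hγU t ht)) (fun t ht ↦ hdiff _ (hγU t ht)) hbound
  have hlen' : 2 * C * ∫ t in (0:ℝ)..1, ‖derivWithin γ (Icc 0 1) t‖ ≤ 2 * C * L := by
    gcongr
  have hγ0_pos : 0 < η (γ 0) := hpos _ (hγU 0 (left_mem_Icc.2 zero_le_one))
  rw [← Real.exp_log hγ0_pos, ← Real.exp_add, ← Real.log_le_iff_le_exp (hpos _ hs)]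
  linarith

/-- Lemma 3.4 of the paper: a positive differentiable function on `U ⊆ ℂ`
whose partial derivatives are dominated by `C·η`, on a set where every point
is joined to `s₀` by a C¹ path of length at most `L` inside `U`, satisfies
`η(s) ≤ η(s₀)·exp(2CL)` on `U`. -/
theorem bounded_on_path_connected_of_partial_derivative_bound
    (U : Set ℂ) (s₀ : ℂ) (hs₀ : s₀ ∈ U)
    (C L : ℝ) (hC : 0 < C) (hL : 0 < L)
    (η : ℂ → ℝ)
    (hpos : ∀ s ∈ U, 0 < η s)
    (hdiff : ∀ s ∈ U, DifferentiableAt ℝ η s)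
    (hx : ∀ s ∈ U, |fderiv ℝ η s 1| ≤ C * η s)
    (hy : ∀ s ∈ U, |fderiv ℝ η s Complex.I| ≤ C * η s)
    (hpath : ∀ s ∈ U, ∃ γ : ℝ → ℂ,
      ContDiffOn ℝ 1 γ (Set.Icc 0 1) ∧
      γ 0 = s₀ ∧ γ 1 = s ∧
      (∀ t ∈ Set.Icc (0:ℝ) 1, γ t ∈ U) ∧
      (∫ t in (0:ℝ)..1, ‖derivWithin γ (Set.Icc 0 1) t‖) ≤ L) :
    ∀ s ∈ U, η s ≤ η s₀ * Real.exp (2 * C * L) :=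
  bounded_on_path_connected_of_partial_derivative_bound_general U s₀ C L hC η hpos hdiff hx hy hpath
end

section
/- Let r > 0, let D* := { z ∈ ℂ : 0 < |z| < r } be the punctured open disc of radius r, and let A be a subset of D* that is closed in D* and discrete. Set U := D* \ A. Then there exist a point s₀ ∈ U and a constant L > 0 such that every point s ∈ U can be joined to s₀ by a C¹ path of length at most L in U, i.e. there exists a continuously differentiable map γ : [0,1] → ℂ with γ(0) = s₀, γ(1) = s, γ(t) ∈ U for all t ∈ [0,1], and ∫₀¹ ‖γ'(t)‖ dt ≤ L. -/
/-!
A discrete subset of `ℂ` is countable, so together with the puncture it forms a countable set `C`.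
Given `s₀` and `s` in the disc off `C`, the lines through `s₀` or `s` and a point of `C` form a
Lebesgue-null set, so some `p` in the disc lies on none of them. The segments `[s₀, p]` and
`[p, s]` then miss `C`, stay in the convex disc, and have total length less than `4r`; run
through with a smooth transition that comes to rest at `p`, the broken line is `C¹`.
-/

open Set Metric MeasureTheory Real
open scoped Convex

theorem Set.Countable.of_forall_ball_inter_eq_singleton {X : Type*} [PseudoMetricSpace X]
    [HereditarilyLindelofSpace X] {A : Set X} (hA : ∀ a ∈ A, ∃ ε > 0, ball a ε ∩ A = {a}) :
    A.Countable :=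
  (HereditarilyLindelofSpace.isLindelof A).countable_of_isDiscrete <|
    isDiscrete_iff_forall_mem_exists_isOpen.2 fun a ha =>
      let ⟨ε, _, hε⟩ := hA a ha
      ⟨ball a ε, isOpen_ball, hε⟩

section

variable {E : Type*} [NormedAddCommGroup E] [NormedSpace ℝ E]

theorem affineSpan_pair_ne_top_of_one_lt_finrank [FiniteDimensional ℝ E]
    (hE : 1 < Module.finrank ℝ E) (x y : E) : line[ℝ, x, y] ≠ ⊤ := by
  intro h
  have h1 : Module.finrank ℝ (vectorSpan ℝ ({x, y} : Set E)) ≤ 1 :=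
    collinear_iff_finrank_le_one.1 (collinear_pair ℝ x y)
  rw [(AffineSubspace.affineSpan_eq_top_iff_vectorSpan_eq_top_of_nonempty ℝ E E
    (insert_nonempty x {y})).1 h, finrank_top] at h1
  omega

theorem mem_affineSpan_pair_of_mem_segment {x y z : E} (hy : y ∈ [x -[ℝ] z]) (hxy : x ≠ y) :
    z ∈ line[ℝ, x, y] :=
  (mem_segment_iff_wbtw.1 hy).collinear.mem_affineSpan_of_mem_of_ne (by simp) (by simp)
    (by simp) hxy

theorem segment_subset_diff_of_forall_notMem_affineSpan_pair {Ω C : Set E} (hΩ : Convex ℝ Ω)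
    {w z : E} (hw : w ∈ Ω \ C) (hz : z ∈ Ω) (hzC : ∀ c ∈ C, z ∉ line[ℝ, w, c]) :
    [w -[ℝ] z] ⊆ Ω \ C := fun v hv =>
  ⟨hΩ.segment_subset hw.1 hz hv, fun hvC =>
    hzC v hvC (mem_affineSpan_pair_of_mem_segment hv (ne_of_mem_of_not_mem hvC hw.2).symm)⟩

theorem exists_segment_union_segment_subset_diff [FiniteDimensional ℝ E]
    (hE : 1 < Module.finrank ℝ E) {Ω C : Set E} (hΩo : IsOpen Ω) (hΩ : Convex ℝ Ω)
    (hC : C.Countable) {x y : E} (hx : x ∈ Ω \ C) (hy : y ∈ Ω \ C) :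
    ∃ z, [x -[ℝ] z] ∪ [z -[ℝ] y] ⊆ Ω \ C := by
  borelize E
  let N := ⋃ c ∈ C, (line[ℝ, x, c] ∪ line[ℝ, y, c] : Set E)
  have hN : (Measure.addHaar : Measure E) N = 0 :=
    (measure_biUnion_null_iff hC).2 fun c _ => measure_union_null
      (Measure.addHaar_affineSubspace _ _ (affineSpan_pair_ne_top_of_one_lt_finrank hE x c))
      (Measure.addHaar_affineSubspace _ _ (affineSpan_pair_ne_top_of_one_lt_finrank hE y c))
  obtain ⟨z, hzΩ, hzN⟩ : (Ω \ N).Nonempty := nonempty_of_measure_ne_zero <| by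
    rw [measure_sdiff_null hN]
    exact hΩo.measure_ne_zero _ ⟨x, hx.1⟩
  simp only [N, mem_iUnion₂, mem_union, not_exists, not_or] at hzN
  refine ⟨z, union_subset ?_ ?_⟩
  · exact segment_subset_diff_of_forall_notMem_affineSpan_pair hΩ hx hzΩ fun c hc => (hzN c hc).1
  · rw [segment_symm]
    exact segment_subset_diff_of_forall_notMem_affineSpan_pair hΩ hy hzΩ fun c hc => (hzN c hc).2

theorem integral_norm_deriv_add_smul_add_smul_le {f g : ℝ → ℝ} (hf : ContDiff ℝ 1 f)
    (hg : ContDiff ℝ 1 g) (hf_mono : Monotone f) (hg_mono : Monotone g) (x u v : E) {a b : ℝ}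
    (hab : a ≤ b) :
    ∫ t in a..b, ‖deriv (fun t => x + f t • u + g t • v) t‖
      ≤ (f b - f a) * ‖u‖ + (g b - g a) * ‖v‖ := by
  have hf' := hf.continuous_deriv le_rfl
  have hg' := hg.continuous_deriv le_rfl
  have hγ : ContDiff ℝ 1 fun t => x + f t • u + g t • v := by fun_prop
  have hpt : ∀ t, ‖deriv (fun t => x + f t • u + g t • v) t‖
      ≤ deriv f t * ‖u‖ + deriv g t * ‖v‖ := fun t => by
    have hd : HasDerivAt (fun t => x + f t • u + g t • v) (deriv f t • u + deriv g t • v) t :=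
      (((hf.differentiable one_ne_zero t).hasDerivAt.smul_const u).const_add x).add
        ((hg.differentiable one_ne_zero t).hasDerivAt.smul_const v)
    rw [hd.deriv]
    refine (norm_add_le _ _).trans_eq ?_
    rw [norm_smul, norm_smul, Real.norm_of_nonneg hf_mono.deriv_nonneg,
      Real.norm_of_nonneg hg_mono.deriv_nonneg]
  calc ∫ t in a..b, ‖deriv (fun t => x + f t • u + g t • v) t‖
      ≤ ∫ t in a..b, (deriv f t * ‖u‖ + deriv g t * ‖v‖) :=
        intervalIntegral.integral_mono_on hab
          ((hγ.continuous_deriv le_rfl).norm.intervalIntegrable _ _)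
          ((by fun_prop : Continuous _).intervalIntegrable _ _) fun t _ => hpt t
    _ = (f b - f a) * ‖u‖ + (g b - g a) * ‖v‖ := by
      rw [intervalIntegral.integral_add (f := fun t => deriv f t * ‖u‖)
          (g := fun t => deriv g t * ‖v‖) ((hf'.mul continuous_const).intervalIntegrable _ _)
          ((hg'.mul continuous_const).intervalIntegrable _ _),
        intervalIntegral.integral_mul_const, intervalIntegral.integral_mul_const,
        intervalIntegral.integral_deriv_eq_sub (fun t _ => hf.differentiable one_ne_zero t)
          (hf'.intervalIntegrable _ _),
        intervalIntegral.integral_deriv_eq_sub (fun t _ => hg.differentiable one_ne_zero t)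
          (hg'.intervalIntegrable _ _)]

-- Both ramps are flat at `t = 1 / 2`, so the corner at `z` does not spoil smoothness.
noncomputable def smoothBrokenLine (x z y : E) (t : ℝ) : E :=
  x + smoothTransition (2 * t) • (z - x) + smoothTransition (2 * t - 1) • (y - z)

variable (x z y : E)

theorem contDiff_smoothBrokenLine {n : ℕ∞} : ContDiff ℝ n (smoothBrokenLine x z y) := by
  unfold smoothBrokenLine
  have := smoothTransition.contDiff (n := n)
  fun_prop

@[simp]
theorem smoothBrokenLine_zero : smoothBrokenLine x z y 0 = x := by
  simp [smoothBrokenLine, smoothTransition.zero_of_nonpos]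

@[simp]
theorem smoothBrokenLine_one : smoothBrokenLine x z y 1 = y := by
  norm_num [smoothBrokenLine, smoothTransition.one_of_one_le]

theorem smoothBrokenLine_mem (t : ℝ) :
    smoothBrokenLine x z y t ∈ [x -[ℝ] z] ∪ [z -[ℝ] y] := by
  rcases le_total t (1 / 2) with ht | ht
  · left
    rw [segment_eq_image']
    refine ⟨smoothTransition (2 * t), ⟨smoothTransition.nonneg _, smoothTransition.le_one _⟩, ?_⟩
    simp [smoothBrokenLine, smoothTransition.zero_of_nonpos (show 2 * t - 1 ≤ 0 by linarith)]
  · right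
    rw [segment_eq_image']
    refine ⟨smoothTransition (2 * t - 1),
      ⟨smoothTransition.nonneg _, smoothTransition.le_one _⟩, ?_⟩
    simp only [smoothBrokenLine, smoothTransition.one_of_one_le (show 1 ≤ 2 * t by linarith),
      one_smul, add_sub_cancel]

theorem integral_norm_derivWithin_smoothBrokenLine_le :
    ∫ t in (0 : ℝ)..1, ‖derivWithin (smoothBrokenLine x z y) (Icc 0 1) t‖
      ≤ ‖z - x‖ + ‖y - z‖ := by
  have hdiff := (contDiff_smoothBrokenLine x z y (n := 1)).differentiable one_ne_zero
  calc ∫ t in (0 : ℝ)..1, ‖derivWithin (smoothBrokenLine x z y) (Icc 0 1) t‖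
      = ∫ t in (0 : ℝ)..1, ‖deriv (smoothBrokenLine x z y) t‖ := by
        refine intervalIntegral.integral_congr fun t ht => ?_
        rw [uIcc_of_le zero_le_one] at ht
        simp only [(hdiff t).derivWithin (uniqueDiffOn_Icc one_pos t ht)]
    _ ≤ (smoothTransition (2 * 1) - smoothTransition (2 * 0)) * ‖z - x‖
        + (smoothTransition (2 * 1 - 1) - smoothTransition (2 * 0 - 1)) * ‖y - z‖ :=
      integral_norm_deriv_add_smul_add_smul_le (f := fun t => smoothTransition (2 * t))
        (smoothTransition.contDiff.comp (by fun_prop)) (smoothTransition.contDiff.comp (by fun_prop))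
        (smoothTransition.monotone.comp fun _ _ h => by linarith)
        (smoothTransition.monotone.comp fun _ _ h => by linarith) x (z - x) (y - z) zero_le_one
    _ = ‖z - x‖ + ‖y - z‖ := by
      norm_num [smoothTransition.zero_of_nonpos, smoothTransition.one_of_one_le]

end

theorem punctured_disc_minus_discrete_bounded_paths_general
    (r : ℝ) (hr : 0 < r)
    (A : Set ℂ)
    (hAdiscrete : ∀ a ∈ A, ∃ ε > 0, Metric.ball a ε ∩ A = {a}) :
    ∃ s₀ ∈ ({z : ℂ | 0 < ‖z‖ ∧ ‖z‖ < r} \ A),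
      ∃ L > 0,
        ∀ s ∈ ({z : ℂ | 0 < ‖z‖ ∧ ‖z‖ < r} \ A),
          ∃ γ : ℝ → ℂ,
            ContDiffOn ℝ 1 γ (Set.Icc 0 1) ∧
            γ 0 = s₀ ∧ γ 1 = s ∧
            (∀ t ∈ Set.Icc (0:ℝ) 1,
              γ t ∈ ({z : ℂ | 0 < ‖z‖ ∧ ‖z‖ < r} \ A)) ∧
            (∫ t in (0:ℝ)..1, ‖derivWithin γ (Set.Icc 0 1) t‖) ≤ L := by
  have hU : {z : ℂ | 0 < ‖z‖ ∧ ‖z‖ < r} \ A = ball 0 r \ insert 0 A := by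
    ext z
    simp only [mem_sdiff, mem_ofPred_eq, norm_pos_iff, mem_ball_zero_iff, mem_insert_iff, not_or]
    tauto
  have hC : (insert 0 A).Countable :=
    (Set.Countable.of_forall_ball_inter_eq_singleton hAdiscrete).insert 0
  rw [hU]
  obtain ⟨s₀, hs₀⟩ : (ball (0 : ℂ) r \ insert 0 A).Nonempty :=
    (hC.dense_compl ℝ).inter_open_nonempty _ isOpen_ball ⟨0, mem_ball_self hr⟩
  refine ⟨s₀, hs₀, 4 * r, by positivity, fun s hs => ?_⟩
  obtain ⟨p, hp⟩ := exists_segment_union_segment_subset_diff (by simp) isOpen_ball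
    (convex_ball 0 r) hC hs₀ hs
  have hp_mem : ‖p‖ < r := mem_ball_zero_iff.1 (hp (Or.inl (right_mem_segment ℝ s₀ p))).1
  refine ⟨smoothBrokenLine s₀ p s, (contDiff_smoothBrokenLine s₀ p s).contDiffOn,
    smoothBrokenLine_zero s₀ p s, smoothBrokenLine_one s₀ p s,
    fun t _ => hp (smoothBrokenLine_mem s₀ p s t), ?_⟩
  calc _ ≤ ‖p - s₀‖ + ‖s - p‖ := integral_norm_derivWithin_smoothBrokenLine_le s₀ p s
    _ ≤ (‖p‖ + ‖s₀‖) + (‖s‖ + ‖p‖) := add_le_add (norm_sub_le _ _) (norm_sub_le _ _)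
    _ ≤ 4 * r := by linarith [mem_ball_zero_iff.1 hs₀.1, mem_ball_zero_iff.1 hs.1]

/-- The complement in a punctured disc of a closed discrete subset satisfies
the uniform bounded-length C¹-path-connectivity hypothesis of Lemma 3.4. -/
theorem punctured_disc_minus_discrete_bounded_paths
    (r : ℝ) (hr : 0 < r)
    (A : Set ℂ)
    (hAsub : A ⊆ {z : ℂ | 0 < ‖z‖ ∧ ‖z‖ < r})
    (hAclosed : closure A ∩ {z : ℂ | 0 < ‖z‖ ∧ ‖z‖ < r} ⊆ A)
    (hAdiscrete : ∀ a ∈ A, ∃ ε > 0, Metric.ball a ε ∩ A = {a}) :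
    ∃ s₀ ∈ ({z : ℂ | 0 < ‖z‖ ∧ ‖z‖ < r} \ A),
      ∃ L > 0,
        ∀ s ∈ ({z : ℂ | 0 < ‖z‖ ∧ ‖z‖ < r} \ A),
          ∃ γ : ℝ → ℂ,
            ContDiffOn ℝ 1 γ (Set.Icc 0 1) ∧
            γ 0 = s₀ ∧ γ 1 = s ∧
            (∀ t ∈ Set.Icc (0:ℝ) 1,
              γ t ∈ ({z : ℂ | 0 < ‖z‖ ∧ ‖z‖ < r} \ A)) ∧
            (∫ t in (0:ℝ)..1, ‖derivWithin γ (Set.Icc 0 1) t‖) ≤ L :=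
  punctured_disc_minus_discrete_bounded_paths_general r hr A hAdiscrete
end
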